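/- In the mixed-measure setting, let f̃ : I → ℝ be measurable and μ-square-integrable with ∫_I f̃ dμ = 0, and let f̃_c(t) = f̃(t) − (1/λ(I)) ∫_C f̃ dλ for t ∈ C, f̃_d(t_d) = f̃(t_d) for d = 1, …, D, and f̃_d(t_{D+1}) = (1/λ(I)) ∫_C f̃ dλ. Then the Pythagoras identity holds: ∫_I f̃^2 dμ = ∫_C f̃_c^2 dλ + Σ_{d=1}^D w_d f̃_d(t_d)^2 + λ(I) · f̃_d(t_{D+1})^2. In particular, the squared L²₀(μ) norm of f̃ is the sum of the squared norms of its continuous component in L²₀(λ) and its discrete component in L²₀(δ•). -/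

import Mathlib

/-!
The Dirac part of `μ` contributes `Σ_d w_d f̃(t_d)²` and the Lebesgue part `∫_I f̃² dλ`.
Since `D` is finite, hence `λ`-null, `c` is just the `λ`-average of `f̃` over `I`, and for an
average the variance identity `∫_I (f̃ - c)² dλ = ∫_I f̃² dλ - λ(I) c²` holds.
-/

open MeasureTheory
open scoped Classical

/-- The mixed reference measure `μ = Σ_d w_d δ_{t_d} + λ`, where `λ` is Lebesgue measure
restricted to `I`. -/
noncomputable def mixedMeasure (I : Set ℝ) (n : ℕ) (t : Fin n → ℝ) (w : Fin n → ℝ) :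
    Measure ℝ :=
  (∑ d, ENNReal.ofReal (w d) • Measure.dirac (t d)) + volume.restrict I

open Set

theorem integral_sub_average_sq {α : Type*} [MeasurableSpace α] {μ : Measure α} {f : α → ℝ}
    (hf : MemLp f 2 μ) :
    ∫ x, (f x - ⨍ y, f y ∂μ) ^ 2 ∂μ = ∫ x, f x ^ 2 ∂μ - μ.real univ * (⨍ y, f y ∂μ) ^ 2 := by
  by_cases hμ : IsFiniteMeasure μ
  · set m := ⨍ y, f y ∂μ
    have hf1 : Integrable f μ := hf.integrable one_le_two
    have hmean : ∫ x, f x ∂μ = μ.real univ * m := (measure_smul_average μ f).symm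
    have hexpand : (fun x => (f x - m) ^ 2) = fun x => f x ^ 2 - 2 * m * f x + m ^ 2 := by
      ext x; ring
    rw [hexpand, integral_add (f := fun x => f x ^ 2 - 2 * m * f x)
        (hf.integrable_sq.sub (hf1.const_mul _)) (integrable_const _),
      integral_sub hf.integrable_sq (hf1.const_mul _), integral_const_mul, integral_const, hmean,
      smul_eq_mul]
    ring
  · -- `μ univ = ∞`, so both the average and `μ.real univ` are junk zeros.
    have hinf : μ univ = ⊤ := by simpa [isFiniteMeasure_iff] using hμ
    have hzero : ⨍ y, f y ∂μ = 0 := by simp [average_eq, measureReal_def, hinf]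
    simp [hzero, measureReal_def, hinf]

theorem restrict_restrict_sdiff_of_finite {α : Type*} [MeasurableSpace α] {μ : Measure α}
    [NullSingletonClass μ] {s : Set α} (hs : s.Finite) (I : Set α) :
    (μ.restrict I).restrict (I \ s) = μ.restrict I := by
  rw [Measure.restrict_restrict_of_subset sdiff_subset]
  exact Measure.restrict_congr_set (sdiff_null_ae_eq_self (hs.measure_zero μ))

section mixedMeasure

variable {I : Set ℝ} {n : ℕ} {t : Fin n → ℝ} {w : Fin n → ℝ}

theorem mixedMeasure_restrict_self (hI : MeasurableSet I) (htI : ∀ d, t d ∈ I) :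
    (mixedMeasure I n t w).restrict I = mixedMeasure I n t w := by
  refine Measure.restrict_eq_self_of_ae_mem ?_
  rw [mixedMeasure, ae_add_measure_iff, ae_finsetSum_measure_iff]
  exact ⟨fun d _ => Measure.ae_smul_measure (by simp [ae_dirac_eq, htI d]) _, ae_restrict_mem hI⟩

theorem integral_mixedMeasure (hw : ∀ d, 0 ≤ w d) {g : ℝ → ℝ}
    (hg : Integrable g (mixedMeasure I n t w)) :
    ∫ x, g x ∂mixedMeasure I n t w = ∑ d, w d * g (t d) + ∫ x in I, g x := by
  rw [mixedMeasure, integral_add_measure, integral_finsetSum_measure]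
  · simp [integral_smul_measure, ENNReal.toReal_ofReal (hw _)]
  · exact fun d _ => (integrable_dirac enorm_lt_top).smul_measure ENNReal.ofReal_ne_top
  · exact (integrable_add_measure.mp hg).1
  · exact (integrable_add_measure.mp hg).2

theorem memLp_two_volume_restrict_of_mixedMeasure {f : ℝ → ℝ} (hf : Measurable f)
    (hsq : Integrable (fun x => f x ^ 2) (mixedMeasure I n t w)) :
    MemLp f 2 (volume.restrict I) :=
  (memLp_two_iff_integrable_sq hf.aestronglyMeasurable).2 (integrable_add_measure.mp hsq).2

end mixedMeasure

theorem mixed_L2_pythagoras_general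
    (I : Set ℝ) (hImeas : MeasurableSet I)
    (n : ℕ) (t : Fin n → ℝ) (htI : ∀ d, t d ∈ I)
    (w : Fin n → ℝ) (hw : ∀ d, 0 < w d)
    (ft : ℝ → ℝ) (hft : Measurable ft)
    (hsq : Integrable (fun x => (ft x) ^ 2) (mixedMeasure I n t w))
    (c : ℝ)
    (hc : c = (volume I).toReal⁻¹ * ∫ x in I \ Set.range t, ft x ∂(volume.restrict I)) :
    ∫ x in I, (ft x) ^ 2 ∂(mixedMeasure I n t w) =
      (∫ x in I \ Set.range t, (ft x - c) ^ 2 ∂(volume.restrict I)) +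
        ∑ d, w d * (ft (t d)) ^ 2 + (volume I).toReal * c ^ 2 := by
  have hC := restrict_restrict_sdiff_of_finite (μ := volume) (finite_range t) I
  have hc_average : c = ⨍ x in I, ft x := by
    rw [hc, hC, setAverage_eq, smul_eq_mul, measureReal_def]
  subst hc_average
  rw [mixedMeasure_restrict_self hImeas htI, integral_mixedMeasure (fun d => (hw d).le) hsq, hC,
    integral_sub_average_sq (memLp_two_volume_restrict_of_mixedMeasure hft hsq),
    measureReal_restrict_apply_univ, measureReal_def]
  ring

/-- In the mixed-measure setting, the Pythagoras identity for the orthogonal decomposition of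
`f̃ ∈ L²₀(μ)` into its continuous component `f̃_c = f̃ − c` (with `c = (1/λ(I)) ∫_C f̃ dλ`) and
its discrete component `f̃_d`:
`∫_I f̃² dμ = ∫_C f̃_c² dλ + Σ_d w_d f̃_d(t_d)² + λ(I) f̃_d(t_{D+1})²`. -/
theorem mixed_L2_pythagoras
    (I : Set ℝ) (hImeas : MeasurableSet I) (hIconn : I.OrdConnected)
    (hI0 : 0 < volume I) (hIfin : volume I < ⊤)
    (n : ℕ) (t : Fin n → ℝ) (htinj : Function.Injective t) (htI : ∀ d, t d ∈ I)
    (w : Fin n → ℝ) (hw : ∀ d, 0 < w d)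
    (ft : ℝ → ℝ) (hft : Measurable ft)
    (hsq : Integrable (fun x => (ft x) ^ 2) (mixedMeasure I n t w))
    (hzero : ∫ x, ft x ∂(mixedMeasure I n t w) = 0)
    (c : ℝ)
    (hc : c = (volume I).toReal⁻¹ * ∫ x in I \ Set.range t, ft x ∂(volume.restrict I)) :
    ∫ x in I, (ft x) ^ 2 ∂(mixedMeasure I n t w) =
      (∫ x in I \ Set.range t, (ft x - c) ^ 2 ∂(volume.restrict I)) +
        ∑ d, w d * (ft (t d)) ^ 2 + (volume I).toReal * c ^ 2 :=
  mixed_L2_pythagoras_general I hImeas n t htI w hw ft hft hsq c hc
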